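/- Let n ∈ ℕ, n ≥ 1, and t > 0. Then the n-th spatial derivative of the heat kernel satisfies Θ_t^{(n)}(x) = (−1)^n (2√t)^{−n} Θ_t(x) H_n(x/(2√t)) for all x ∈ ℝ, and ∫_ℝ |Θ_t^{(n)}(x)| dx = c_n t^{−n/2}, where c_n = (2^n √π)^{−1} ∫_ℝ e^{−x²} |H_n(x)| dx. Moreover c_n ≤ 1.087 · √(n!) · 2^{(1−n)/2}. -/

import Mathlib

open MeasureTheory Filter Topology Polynomial

/-- The Gauss–Weierstrass heat kernel `Θ_t(x) = (4πt)^(−1/2) exp(−x²/(4t))` for `t > 0`. -/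
noncomputable def heatK (t x : ℝ) : ℝ :=
  (Real.sqrt (4 * Real.pi * t))⁻¹ * Real.exp (-x ^ 2 / (4 * t))

/-- The `n`-th physicists' Hermite polynomial via the Rodrigues formula:
`H_n(x) = (−1)^n e^{x²} (d/dx)^n e^{−x²}`. -/
noncomputable def hermiteH (n : ℕ) (x : ℝ) : ℝ :=
  (-1) ^ n * Real.exp (x ^ 2) * iteratedDeriv n (fun y : ℝ => Real.exp (-y ^ 2)) x

/-- `c_n = (2^n √π)^{−1} ∫ e^{−x²} |H_n(x)| dx`. -/
noncomputable def cHermite (n : ℕ) : ℝ :=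
  ((2 : ℝ) ^ n * Real.sqrt Real.pi)⁻¹ * ∫ x : ℝ, Real.exp (-x ^ 2) * |hermiteH n x|

lemma herm_deriv (n : ℕ) : derivative (hermite (n+1)) = (n+1 : ℤ) • hermite n := by
  induction n with
  | zero => simp [hermite_one, hermite_zero]
  | succ n ih =>
    rw [hermite_succ (n+1), derivative_sub, derivative_mul, derivative_X, ih,
      derivative_smul, hermite_succ n]
    simp only [zsmul_eq_mul]
    push_cast
    ring
noncomputable def Pherm (n : ℕ) : Polynomial ℝ := (hermite n).map (Int.castRingHom ℝ)
lemma Pherm_succ (n : ℕ) : Pherm (n+1) = X * Pherm n - derivative (Pherm n) := by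
  unfold Pherm
  rw [hermite_succ, Polynomial.map_sub, Polynomial.map_mul, map_X, derivative_map]
lemma Pherm_deriv (n : ℕ) : derivative (Pherm (n+1)) = C ((n:ℝ)+1) * Pherm n := by
  unfold Pherm
  rw [derivative_map, herm_deriv]
  simp only [zsmul_eq_mul, Polynomial.map_mul, Polynomial.map_intCast]
  push_cast
  simp only [Polynomial.C_add, Polynomial.C_1, Polynomial.C_eq_natCast]
lemma hasDerivAt_gauss (x : ℝ) :
    HasDerivAt (fun y : ℝ => Real.exp (-(y^2/2))) (-x * Real.exp (-(x^2/2))) x := by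
  have h : HasDerivAt (fun y : ℝ => -(y^2/2)) (-x) x := by
    have := ((hasDerivAt_pow 2 x).div_const 2).neg
    refine this.congr_deriv ?_
    push_cast
    norm_num
  simpa [mul_comm] using h.exp
lemma contDiff_gauss : ContDiff ℝ (⊤ : ℕ∞) (fun y : ℝ => Real.exp (-(y^2/2))) :=
  Real.contDiff_exp.comp (((contDiff_id.pow 2).div_const 2).neg)
lemma contDiff_g : ContDiff ℝ (⊤ : ℕ∞) (fun y : ℝ => Real.exp (-y^2)) :=
  Real.contDiff_exp.comp ((contDiff_id.pow 2).neg)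
lemma integrable_pg (p : Polynomial ℝ) {b : ℝ} (hb : 0 < b) :
    Integrable fun x : ℝ => eval x p * Real.exp (-b*x^2) := by
  induction p using Polynomial.induction_on' with
  | add p q hp hq =>
    refine (hp.add hq).congr (Filter.Eventually.of_forall fun x => ?_)
    simp [add_mul, eval_add]
  | monomial k a =>
    have h : Integrable fun x : ℝ => x ^ k * Real.exp (-b*x^2) := by
      have := integrable_rpow_mul_exp_neg_mul_sq hb (s := (k:ℝ)) (lt_of_lt_of_le neg_one_lt_zero (Nat.cast_nonneg k))
      simpa [Real.rpow_natCast] using this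
    simpa [eval_monomial, mul_assoc] using h.const_mul a
lemma exp_half_eq (x : ℝ) : Real.exp (-(x^2/2)) = Real.exp (-(1/2 : ℝ)*x^2) := by
  rw [show -(x^2/2) = -(1/2:ℝ)*x^2 from by ring]
lemma integrable_pg' (p : Polynomial ℝ) :
    Integrable fun x : ℝ => Real.exp (-(x^2/2)) * eval x p := by
  have := integrable_pg p (b := 1/2) (by norm_num)
  refine this.congr (Filter.Eventually.of_forall fun x => ?_)
  simp only [exp_half_eq, mul_comm]
lemma herm_norm (n : ℕ) :
    ∫ x : ℝ, Real.exp (-(x^2/2)) * (eval x (Pherm n))^2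
      = (n.factorial : ℝ) * Real.sqrt (2*Real.pi) := by
  induction n with
  | zero =>
    simp only [Pherm, hermite_zero, Polynomial.map_C, eval_C, Int.cast_one, map_one, Polynomial.map_one, eval_one, one_pow, mul_one,
      Nat.factorial_zero, Nat.cast_one, one_mul]
    simp_rw [exp_half_eq]
    rw [integral_gaussian]
    congr 1
    ring
  | succ n ih =>
    have hu : ∀ x : ℝ, HasDerivAt (fun y => eval y (Pherm (n+1)))
        (((n:ℝ)+1) * eval x (Pherm n)) x := fun x => by
      simpa [Pherm_deriv] using (Pherm (n+1)).hasDerivAt x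
    have hv : ∀ x : ℝ, HasDerivAt (fun y => Real.exp (-(y^2/2)) * eval y (Pherm n))
        (-(Real.exp (-(x^2/2)) * eval x (Pherm (n+1)))) x := fun x => by
      have h1 := (hasDerivAt_gauss x).mul ((Pherm n).hasDerivAt x)
      refine h1.congr_deriv ?_
      rw [Pherm_succ]
      simp only [eval_sub, eval_mul, eval_X]
      ring
    have huv' : Integrable ((fun y => eval y (Pherm (n+1))) *
        (fun x => -(Real.exp (-(x^2/2)) * eval x (Pherm (n+1))))) := by
      have := (integrable_pg' ((Pherm (n+1)) * (Pherm (n+1)))).neg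
      refine this.congr (Filter.Eventually.of_forall fun x => ?_)
      simp [Pi.mul_apply, eval_mul]; ring
    have hu'v : Integrable ((fun x => ((n:ℝ)+1) * eval x (Pherm n)) *
        (fun y => Real.exp (-(y^2/2)) * eval y (Pherm n))) := by
      have := (integrable_pg' ((Pherm n) * (Pherm n))).const_mul ((n:ℝ)+1)
      refine this.congr (Filter.Eventually.of_forall fun x => ?_)
      simp [Pi.mul_apply, eval_mul]; ring
    have huv : Integrable ((fun y => eval y (Pherm (n+1))) *
        (fun y => Real.exp (-(y^2/2)) * eval y (Pherm n))) := by
      have := integrable_pg' ((Pherm (n+1)) * (Pherm n))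
      refine this.congr (Filter.Eventually.of_forall fun x => ?_)
      simp [Pi.mul_apply, eval_mul]; ring
    have key := integral_mul_deriv_eq_deriv_mul_of_integrable (fun x _ => hu x) (fun x _ => hv x) huv' hu'v huv
    have lhs : (∫ x : ℝ, eval x (Pherm (n+1)) * -(Real.exp (-(x^2/2)) * eval x (Pherm (n+1))))
        = -∫ x : ℝ, Real.exp (-(x^2/2)) * (eval x (Pherm (n+1)))^2 := by
      rw [← integral_neg]
      congr 1; funext x; ring
    have rhs : (∫ x : ℝ, (((n:ℝ)+1) * eval x (Pherm n)) * (Real.exp (-(x^2/2)) * eval x (Pherm n)))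
        = ((n:ℝ)+1) * ∫ x : ℝ, Real.exp (-(x^2/2)) * (eval x (Pherm n))^2 := by
      rw [← integral_const_mul]
      congr 1; funext x; ring
    rw [lhs, rhs] at key
    have : (∫ x : ℝ, Real.exp (-(x^2/2)) * (eval x (Pherm (n+1)))^2)
        = ((n:ℝ)+1) * ∫ x : ℝ, Real.exp (-(x^2/2)) * (eval x (Pherm n))^2 := by
      linarith [key]
    rw [this, ih, Nat.factorial_succ]
    push_cast
    ring
lemma eval_Pherm (n : ℕ) (x : ℝ) : eval x (Pherm n) = aeval x (hermite n) := by
  simp [Pherm, aeval_def, eval_map]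
lemma itd_gauss (n : ℕ) (y : ℝ) :
    iteratedDeriv n (fun u : ℝ => Real.exp (-(u^2/2))) y
      = (-1:ℝ)^n * aeval y (hermite n) * Real.exp (-(y^2/2)) := by
  rw [iteratedDeriv_eq_iterate]
  exact deriv_gaussian_eq_hermite_mul_gaussian n y
lemma sq_sqrt_two : Real.sqrt 2 * Real.sqrt 2 = 2 := Real.mul_self_sqrt (by norm_num)
lemma hermiteH_eq (n : ℕ) (x : ℝ) :
    hermiteH n x = (Real.sqrt 2)^n * eval (Real.sqrt 2 * x) (Pherm n) := by
  have hcomp : (fun y : ℝ => Real.exp (-y^2))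
      = fun y => (fun u : ℝ => Real.exp (-(u^2/2))) (Real.sqrt 2 * y) := by
    funext y
    simp only []
    congr 1
    rw [mul_pow, Real.sq_sqrt (by norm_num : (0:ℝ) ≤ 2)]
    ring
  have harg : (Real.sqrt 2 * x)^2/2 = x^2 := by
    rw [mul_pow, Real.sq_sqrt (by norm_num : (0:ℝ) ≤ 2)]; ring
  unfold hermiteH
  rw [hcomp, iteratedDeriv_comp_const_mul (contDiff_gauss.of_le (mod_cast le_top)) (Real.sqrt 2)]
  simp only []
  rw [itd_gauss, eval_Pherm, harg]
  rw [show ((-1:ℝ)^n * Real.exp (x^2) * (Real.sqrt 2 ^ n *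
      ((-1:ℝ)^n * (aeval (Real.sqrt 2 * x)) (hermite n) * Real.exp (-x^2))))
    = ((-1:ℝ)^n * (-1:ℝ)^n) * (Real.exp (x^2) * Real.exp (-x^2)) *
      (Real.sqrt 2 ^ n * (aeval (Real.sqrt 2 * x)) (hermite n)) from by ring]
  rw [← pow_add, ← Real.exp_add]
  rw [(neg_one_pow_eq_one_iff_even (by norm_num : (-1:ℝ) ≠ 1)).mpr ⟨n, rfl⟩]
  simp
noncomputable def Qherm (n : ℕ) : Polynomial ℝ :=
  C ((Real.sqrt 2)^n) * ((Pherm n).comp (C (Real.sqrt 2) * X))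
lemma hermiteH_eval (n : ℕ) (x : ℝ) : hermiteH n x = eval x (Qherm n) := by
  rw [hermiteH_eq]
  simp [Qherm, eval_comp]
lemma continuous_hermiteH (n : ℕ) : Continuous fun x => hermiteH n x := by
  have : (fun x => hermiteH n x) = fun x => eval x (Qherm n) := funext (hermiteH_eval n)
  rw [this]
  exact (Qherm n).continuous
lemma int_gauss1 : ∫ x : ℝ, Real.exp (-x^2) = Real.sqrt Real.pi := by
  simp_rw [show ∀ x : ℝ, -x^2 = -1*x^2 from fun x => by ring]
  rw [integral_gaussian, div_one]
lemma intH2 (n : ℕ) : ∫ x : ℝ, Real.exp (-x^2) * (hermiteH n x)^2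
    = 2^n * (n.factorial : ℝ) * Real.sqrt Real.pi := by
  have hsq : ((Real.sqrt 2 : ℝ)^n)^2 = 2^n := by
    rw [← pow_mul, mul_comm n 2, pow_mul, sq, sq_sqrt_two]
  have h : ∀ x : ℝ, Real.exp (-x^2) * hermiteH n x ^ 2
      = (2:ℝ)^n * ((fun u => Real.exp (-(u^2/2)) * (eval u (Pherm n))^2) (Real.sqrt 2 * x)) := by
    intro x
    simp only []
    rw [hermiteH_eq, show ((Real.sqrt 2 * x)^2/2) = x^2 from by
      rw [mul_pow, Real.sq_sqrt (by norm_num : (0:ℝ) ≤ 2)]; ring]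
    rw [mul_pow, hsq]
    ring
  simp_rw [h]
  have hsub := MeasureTheory.Measure.integral_comp_mul_left
      (fun u => Real.exp (-(u^2/2)) * (eval u (Pherm n))^2) (Real.sqrt 2)
  rw [integral_const_mul, hsub, herm_norm]
  have h2 : Real.sqrt (2*Real.pi) = Real.sqrt 2 * Real.sqrt Real.pi :=
    Real.sqrt_mul (by norm_num) _
  have hne : Real.sqrt 2 ≠ 0 := by positivity
  rw [h2, abs_of_nonneg (by positivity : (0:ℝ) ≤ (Real.sqrt 2)⁻¹), smul_eq_mul]
  field_simp
lemma intAbsH_le (n : ℕ) :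
    (∫ x : ℝ, Real.exp (-x^2) * |hermiteH n x|)
      ≤ Real.sqrt Real.pi * (Real.sqrt (2^n) * Real.sqrt (n.factorial)) := by
  set f : ℝ → ℝ := fun x => Real.exp (-(x^2/2)) with hf_def
  set g : ℝ → ℝ := fun x => Real.exp (-(x^2/2)) * |hermiteH n x| with hg_def
  have hf_cont : Continuous f := contDiff_gauss.continuous
  have hg_cont : Continuous g := hf_cont.mul (continuous_hermiteH n).abs
  have hfsq : ∀ x, f x ^ (2:ℕ) = Real.exp (-1*x^2) := fun x => by
    simp only [hf_def, ← Real.exp_nat_mul]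
    congr 1
    push_cast
    ring
  have hgsq : ∀ x, g x ^ (2:ℕ) = Real.exp (-x^2) * (hermiteH n x)^2 := fun x => by
    simp only [hg_def, mul_pow, sq_abs, ← Real.exp_nat_mul]
    congr 2
    push_cast
    ring
  have hfg : ∀ x, f x * g x = Real.exp (-x^2) * |hermiteH n x| := fun x => by
    simp only [hf_def, hg_def, ← mul_assoc, ← Real.exp_add]
    congr 2
    ring
  have hpq : Real.HolderConjugate 2 2 := (Real.holderConjugate_iff_eq_conjExponent one_lt_two).mpr (by norm_num)
  have h2 : ENNReal.ofReal (2:ℝ) = 2 := by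
    rw [ENNReal.ofReal_ofNat]
  have hmem_f : MemLp f (ENNReal.ofReal 2) := by
    rw [h2]
    refine (memLp_two_iff_integrable_sq hf_cont.aestronglyMeasurable).mpr ?_
    refine (integrable_exp_neg_mul_sq (b := 1) one_pos).congr
      (Filter.Eventually.of_forall fun x => ?_)
    simp only []
    rw [hfsq]
  have hmem_g : MemLp g (ENNReal.ofReal 2) := by
    rw [h2]
    refine (memLp_two_iff_integrable_sq hg_cont.aestronglyMeasurable).mpr ?_
    refine ((integrable_pg ((Qherm n)^2) (b := 1) one_pos).congr
      (Filter.Eventually.of_forall fun x => ?_))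
    simp only []
    rw [hgsq, eval_pow, ← hermiteH_eval]
    ring
  have key := integral_mul_le_Lp_mul_Lq_of_nonneg hpq
    (Filter.Eventually.of_forall fun x => (Real.exp_pos _).le)
    (Filter.Eventually.of_forall fun x =>
      mul_nonneg (Real.exp_pos _).le (abs_nonneg _))
    hmem_f hmem_g
  change ∫ a, f a * g a ≤ (∫ a, f a ^ (2:ℝ)) ^ (1/(2:ℝ)) * (∫ a, g a ^ (2:ℝ)) ^ (1/(2:ℝ)) at key
  simp only [hfg] at key
  have e1 : ∀ x : ℝ, f x ^ (2:ℝ) = f x ^ (2:ℕ) := fun x => by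
    rw [show ((2:ℝ)) = ((2:ℕ):ℝ) from by norm_num, Real.rpow_natCast]
  have e2 : ∀ x : ℝ, g x ^ (2:ℝ) = g x ^ (2:ℕ) := fun x => by
    rw [show ((2:ℝ)) = ((2:ℕ):ℝ) from by norm_num, Real.rpow_natCast]
  simp only [e1, e2, hfsq, hgsq] at key
  rw [show (∫ x : ℝ, Real.exp (-1*x^2)) = Real.sqrt Real.pi from by
      rw [integral_gaussian, div_one], intH2 n] at key
  refine key.trans (le_of_eq ?_)
  rw [← Real.sqrt_eq_rpow, ← Real.sqrt_eq_rpow]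
  rw [← Real.sqrt_mul (Real.sqrt_nonneg _)]
  rw [show Real.sqrt Real.pi * (2^n * (n.factorial:ℝ) * Real.sqrt Real.pi)
      = (Real.sqrt Real.pi * Real.sqrt Real.pi) * (2^n * (n.factorial:ℝ)) from by ring]
  rw [Real.mul_self_sqrt Real.pi_pos.le]
  rw [Real.sqrt_mul Real.pi_pos.le, Real.sqrt_mul (by positivity)]
lemma itd_const_mul (n : ℕ) (A : ℝ) (f : ℝ → ℝ) (hf : ContDiff ℝ (⊤ : ℕ∞) f) (x : ℝ) :
    iteratedDeriv n (fun y => A * f y) x = A * iteratedDeriv n f x := by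
  simp only [← iteratedDerivWithin_univ]
  exact iteratedDerivWithin_const_mul (Set.mem_univ x) uniqueDiffOn_univ A
    ((hf.of_le (mod_cast le_top)).contDiffWithinAt)
lemma itd_g (n : ℕ) (y : ℝ) :
    iteratedDeriv n (fun u : ℝ => Real.exp (-u^2)) y
      = (-1:ℝ)^n * Real.exp (-y^2) * hermiteH n y := by
  have h1 : ((-1:ℝ)^n*(-1:ℝ)^n) = 1 := by
    rw [← pow_add]
    exact (neg_one_pow_eq_one_iff_even (by norm_num : (-1:ℝ) ≠ 1)).mpr ⟨n, rfl⟩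
  have h2 : Real.exp (-y^2) * Real.exp (y^2) = 1 := by
    rw [← Real.exp_add]; simp
  rw [hermiteH, show (-1:ℝ)^n * Real.exp (-y^2) * ((-1)^n * Real.exp (y^2) *
      iteratedDeriv n (fun u : ℝ => Real.exp (-u^2)) y)
    = (((-1:ℝ)^n*(-1:ℝ)^n) * (Real.exp (-y^2) * Real.exp (y^2))) *
      iteratedDeriv n (fun u : ℝ => Real.exp (-u^2)) y from by ring, h1, h2]
  ring

/-- `Θ_t^{(n)}(x) = (−1)^n (2√t)^{−n} Θ_t(x) H_n(x/(2√t))`,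
`∫ |Θ_t^{(n)}| = c_n t^{−n/2}`, and `c_n ≤ 1.087 √(n!) 2^{(1−n)/2}`. -/
theorem stmt10 (n : ℕ) (hn : 1 ≤ n) (t : ℝ) (ht : 0 < t) :
    (∀ x : ℝ, iteratedDeriv n (fun y : ℝ => heatK t y) x
      = (-1) ^ n * ((2 * Real.sqrt t) ^ n)⁻¹ * heatK t x
          * hermiteH n (x / (2 * Real.sqrt t))) ∧
    (∫ x : ℝ, |iteratedDeriv n (fun y : ℝ => heatK t y) x|)
      = cHermite n * (Real.sqrt t ^ n)⁻¹ ∧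
    cHermite n ≤ 1.087 * Real.sqrt (n.factorial : ℝ)
        * (2 : ℝ) ^ (((1 : ℝ) - (n : ℝ)) / 2) := by
  have hst : (0:ℝ) < Real.sqrt t := Real.sqrt_pos.mpr ht
  set c : ℝ := (2 * Real.sqrt t)⁻¹ with hc_def
  have hc : 0 < c := by positivity
  have hcsq : ∀ x : ℝ, -(c*x)^2 = -x^2/(4*t) := by
    intro x
    rw [mul_pow, hc_def, inv_pow, mul_pow, Real.sq_sqrt ht.le]
    field_simp
    ring
  have hrep : (fun y : ℝ => heatK t y)
      = fun y => (Real.sqrt (4*Real.pi*t))⁻¹ * ((fun u : ℝ => Real.exp (-u^2)) (c * y)) := by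
    funext y
    simp only [heatK]
    rw [hcsq y]
  have part1 : ∀ x : ℝ, iteratedDeriv n (fun y : ℝ => heatK t y) x
      = (-1) ^ n * ((2 * Real.sqrt t) ^ n)⁻¹ * heatK t x
          * hermiteH n (x / (2 * Real.sqrt t)) := by
    intro x
    have hcd : ContDiff ℝ (⊤ : ℕ∞) fun y : ℝ => (fun u : ℝ => Real.exp (-u^2)) (c * y) :=
      contDiff_g.comp ((contDiff_const.mul contDiff_id))
    rw [hrep, itd_const_mul n _ _ hcd x,
      iteratedDeriv_comp_const_mul (contDiff_g.of_le (mod_cast le_top)) c]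
    simp only []
    rw [itd_g n (c*x), hcsq x]
    rw [show x / (2 * Real.sqrt t) = c * x from by
      rw [hc_def, div_eq_mul_inv, mul_comm]]
    simp only [heatK]
    rw [hc_def, inv_pow]
    ring
  refine ⟨part1, ?_, ?_⟩
  · -- integral identity
    have habs : ∀ x : ℝ, |iteratedDeriv n (fun y : ℝ => heatK t y) x|
        = ((2 * Real.sqrt t) ^ n)⁻¹ * ((Real.sqrt (4*Real.pi*t))⁻¹ *
            ((fun u => Real.exp (-u^2) * |hermiteH n u|) (c * x))) := by
      intro x
      rw [part1 x]
      simp only []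
      rw [abs_mul, abs_mul, abs_mul, abs_pow, abs_neg, abs_one, one_pow, one_mul]
      rw [abs_of_nonneg (by positivity : (0:ℝ) ≤ ((2 * Real.sqrt t) ^ n)⁻¹)]
      rw [show x / (2 * Real.sqrt t) = c * x from by
        rw [hc_def, div_eq_mul_inv, mul_comm]]
      rw [abs_of_nonneg (show (0:ℝ) ≤ heatK t x from by
        simp only [heatK]; positivity)]
      simp only [heatK]
      rw [← hcsq x]
      ring
    simp_rw [habs]
    rw [integral_const_mul, integral_const_mul]
    have hsub := MeasureTheory.Measure.integral_comp_mul_left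
      (fun u => Real.exp (-u^2) * |hermiteH n u|) c
    rw [hsub]
    have hcinv : |c⁻¹| = 2 * Real.sqrt t := by
      rw [hc_def, inv_inv, abs_of_pos (by positivity)]
    rw [hcinv, smul_eq_mul]
    have hpi4 : Real.sqrt (4*Real.pi*t) = 2*Real.sqrt Real.pi*Real.sqrt t := by
      rw [show 4*Real.pi*t = (2*Real.sqrt Real.pi*Real.sqrt t)^2 from by
        rw [mul_pow, mul_pow, Real.sq_sqrt Real.pi_pos.le, Real.sq_sqrt ht.le]; ring]
      exact Real.sqrt_sq (by positivity)
    rw [hpi4, cHermite, mul_pow]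
    have hπ : (0:ℝ) < Real.sqrt Real.pi := Real.sqrt_pos.mpr Real.pi_pos
    field_simp
  · -- the bound
    have hI := intAbsH_le n
    have hpos : (0:ℝ) < ((2:ℝ)^n * Real.sqrt Real.pi)⁻¹ := by positivity
    have step1 : cHermite n ≤ Real.sqrt (n.factorial) * (Real.sqrt (2^n))⁻¹ := by
      rw [cHermite]
      calc ((2:ℝ)^n * Real.sqrt Real.pi)⁻¹ * ∫ x : ℝ, Real.exp (-x^2) * |hermiteH n x|
          ≤ ((2:ℝ)^n * Real.sqrt Real.pi)⁻¹ *
            (Real.sqrt Real.pi * (Real.sqrt (2^n) * Real.sqrt (n.factorial))) := by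
            exact mul_le_mul_of_nonneg_left hI hpos.le
        _ = Real.sqrt (n.factorial) * (Real.sqrt (2^n))⁻¹ := by
            have h2n : ((2:ℝ)^n) = Real.sqrt (2^n) * Real.sqrt (2^n) :=
              (Real.mul_self_sqrt (by positivity)).symm
            have hπ : (0:ℝ) < Real.sqrt Real.pi := Real.sqrt_pos.mpr Real.pi_pos
            have h2npos : (0:ℝ) < Real.sqrt (2^n) := Real.sqrt_pos.mpr (by positivity)
            rw [h2n]
            field_simp
            rw [Real.sqrt_sq h2npos.le]
    refine step1.trans ?_
    have h1 : Real.sqrt ((2:ℝ)^n) = (2:ℝ)^((n:ℝ)/2) := by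
      rw [Real.sqrt_eq_rpow, ← Real.rpow_natCast 2 n, ← Real.rpow_mul (by norm_num)]
      congr 1
      ring
    have h2 : (2:ℝ)^(((1:ℝ)-(n:ℝ))/2) = (2:ℝ)^((1:ℝ)/2) * ((2:ℝ)^((n:ℝ)/2))⁻¹ := by
      rw [← Real.rpow_neg (by norm_num : (0:ℝ) ≤ 2), ← Real.rpow_add (by norm_num : (0:ℝ) < 2)]
      congr 1
      ring
    have h3 : (1:ℝ) ≤ 1.087 * (2:ℝ)^((1:ℝ)/2) := by
      have hs2 : (1:ℝ) ≤ Real.sqrt 2 := by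
        rw [show (1:ℝ) = Real.sqrt 1 from (Real.sqrt_one).symm]
        exact Real.sqrt_le_sqrt (by norm_num)
      rw [← Real.sqrt_eq_rpow]
      nlinarith
    rw [h1, h2]
    have hnn : (0:ℝ) ≤ Real.sqrt (n.factorial) * ((2:ℝ)^((n:ℝ)/2))⁻¹ := by positivity
    calc Real.sqrt (n.factorial) * ((2:ℝ)^((n:ℝ)/2))⁻¹
        = 1 * (Real.sqrt (n.factorial) * ((2:ℝ)^((n:ℝ)/2))⁻¹) := (one_mul _).symm
      _ ≤ (1.087 * (2:ℝ)^((1:ℝ)/2)) * (Real.sqrt (n.factorial) * ((2:ℝ)^((n:ℝ)/2))⁻¹) :=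
          mul_le_mul_of_nonneg_right h3 hnn
      _ = 1.087 * Real.sqrt (n.factorial) * ((2:ℝ)^((1:ℝ)/2) * ((2:ℝ)^((n:ℝ)/2))⁻¹) := by ring
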